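/- Let G ⊆ K⟨X⟩ be a set of nonzero Q-order compatible polynomials with respect to a fixed monomial order. Let g, g' ∈ G be monic, let a, b, a', b' ∈ ⟨X⟩ be monomials with a·LM(g)·b = a'·LM(g')·b' = m, and suppose the monomial m is compatible with Q. Then the S-polynomial s = a·g·b − a'·g'·b' satisfies σ(m) ⊆ σ(s). -/

import Mathlib

open scoped BigOperators

universe u₁ u₂ u₃ u₄ u₅

/-- A labelled quiver: a directed multigraph with edges labelled in `X`. -/
structure LQuiver (V : Type u₁) (E : Type u₂) (X : Type u₃) where
  src : E → V
  tgt : E → V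
  lab : E → X

namespace LQuiver

variable {V : Type u₁} {E : Type u₂} {X : Type u₃}

/-- Paths in the quiver (possibly empty). -/
inductive Walk (Q : LQuiver V E X) : V → V → Type (max u₁ u₂)
  | nil (v : V) : Walk Q v v
  | cons {u : V} (e : E) (p : Walk Q u (Q.src e)) : Walk Q u (Q.tgt e)

/-- The label of a path, a word in the free monoid `⟨X⟩`. -/
def wlabel (Q : LQuiver V E X) : ∀ {u v : V}, Q.Walk u v → FreeMonoid X
  | _, _, .nil _ => 1
  | _, _, .cons e p => FreeMonoid.of (Q.lab e) * Q.wlabel p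

/-- The signature `σ(m)` of a monomial (word) `m`. -/
def sigW (Q : LQuiver V E X) (m : FreeMonoid X) : Set (V × V) :=
  {p : V × V | ∃ w : Q.Walk p.1 p.2, Q.wlabel w = m}

variable {R : Type u₄} [CommRing R]

/-- The signature `σ(f)` of a noncommutative polynomial `f ∈ R⟨X⟩`. -/
def sig (Q : LQuiver V E X) (f : MonoidAlgebra R (FreeMonoid X)) : Set (V × V) :=
  ⋂ m ∈ f.coeff.support, Q.sigW m

/-- A polynomial is compatible with `Q` if its signature is nonempty. -/
def Compatible (Q : LQuiver V E X) (f : MonoidAlgebra R (FreeMonoid X)) : Prop :=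
  (Q.sig f).Nonempty

/-- The projection `s(f)` of `σ(f)` on sources. -/
def srcSet (Q : LQuiver V E X) (f : MonoidAlgebra R (FreeMonoid X)) : Set V :=
  Prod.fst '' Q.sig f

/-- The projection `t(f)` of `σ(f)` on targets. -/
def tgtSet (Q : LQuiver V E X) (f : MonoidAlgebra R (FreeMonoid X)) : Set V :=
  Prod.snd '' Q.sig f

/-- `f` is a `Q`-consequence of `F`. -/
def QConsequence (Q : LQuiver V E X) (F : Set (MonoidAlgebra R (FreeMonoid X)))
    (f : MonoidAlgebra R (FreeMonoid X)) : Prop :=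
  Q.Compatible f ∧
  ∃ (n : ℕ) (g a b : Fin n → MonoidAlgebra R (FreeMonoid X)),
    (∀ i, g i ∈ F) ∧
    f = ∑ i, a i * g i * b i ∧
    ∀ uv ∈ Q.sig f, ∀ i, ∃ ui vi : V,
      (uv.1, ui) ∈ Q.sig (b i) ∧ (ui, vi) ∈ Q.sig (g i) ∧ (vi, uv.2) ∈ Q.sig (a i)

end LQuiver

/-- The monomial `m` regarded as a polynomial in `R⟨X⟩`. -/
noncomputable def mono (R : Type u₄) [CommRing R] {X : Type u₃} (m : FreeMonoid X) :
    MonoidAlgebra R (FreeMonoid X) :=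
  MonoidAlgebra.single m 1

/-- One rewriting step with divisor monomials selected by `DM`. -/
def RewriteStep {R : Type u₄} [CommRing R] {X : Type u₃}
    (G : Set (MonoidAlgebra R (FreeMonoid X)))
    (DM : MonoidAlgebra R (FreeMonoid X) → Set (FreeMonoid X))
    (f h : MonoidAlgebra R (FreeMonoid X)) : Prop :=
  ∃ g ∈ G, ∃ m ∈ DM g, ∃ a b : FreeMonoid X, ∃ lam : R,
    a * m * b ∈ f.coeff.support ∧ h = f + lam • (mono R a * g * mono R b)

/-- A monomial order: a well-founded linear order compatible with multiplication. -/
def IsMonomialOrder {X : Type u₃} (ord : LinearOrder (FreeMonoid X)) : Prop :=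
  WellFounded ord.lt ∧
    ∀ a b m m' : FreeMonoid X, ord.le m m' → ord.le (a * m * b) (a * m' * b)

/-- The leading monomial of a polynomial w.r.t. a linear order on monomials
(defined as `1` for the zero polynomial). -/
noncomputable def LM {K : Type u₄} [CommRing K] {X : Type u₃}
    (ord : LinearOrder (FreeMonoid X)) (f : MonoidAlgebra K (FreeMonoid X)) : FreeMonoid X :=
  letI := ord
  letI : Decidable (f = 0) := Classical.dec _
  if h : f = 0 then 1 else f.coeff.support.max' (Finsupp.support_nonempty_iff.mpr (mt MonoidAlgebra.coeff_eq_zero.mp h))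

/-- One step of standard polynomial reduction w.r.t. a set `G` and a monomial order. -/
def ReduceStep {K : Type u₄} [Field K] {X : Type u₃} (ord : LinearOrder (FreeMonoid X))
    (G : Set (MonoidAlgebra K (FreeMonoid X)))
    (f h : MonoidAlgebra K (FreeMonoid X)) : Prop :=
  ∃ g ∈ G, g ≠ 0 ∧ ∃ a b : FreeMonoid X,
    a * LM ord g * b ∈ f.coeff.support ∧
    h = f - (f.coeff (a * LM ord g * b) / g.coeff (LM ord g)) • (mono K a * g * mono K b)

/-- `f` is `Q`-order compatible w.r.t. the order `ord`. -/
def QOrderCompatible {V : Type u₁} {E : Type u₂} {X : Type u₃} {K : Type u₄} [CommRing K]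
    (Q : LQuiver V E X) (ord : LinearOrder (FreeMonoid X))
    (f : MonoidAlgebra K (FreeMonoid X)) : Prop :=
  Q.Compatible f ∧ Q.sigW (LM ord f) = Q.sig f

/-- A representation of a labelled quiver. -/
structure QRep (R : Type u₄) [CommRing R] {V : Type u₁} {E : Type u₂} {X : Type u₃}
    (Q : LQuiver V E X) where
  M : V → Type u₅
  [addcg : ∀ v, AddCommGroup (M v)]
  [mod : ∀ v, Module R (M v)]
  φ : (e : E) → M (Q.src e) →ₗ[R] M (Q.tgt e)

attribute [instance] QRep.addcg QRep.mod

namespace QRep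

variable {R : Type u₄} [CommRing R] {V : Type u₁} {E : Type u₂} {X : Type u₃}
  {Q : LQuiver V E X}

/-- The linear map induced by a path. -/
def walkMap (ρ : QRep R Q) : ∀ {u v : V}, Q.Walk u v → (ρ.M u →ₗ[R] ρ.M v)
  | _, _, .nil _ => LinearMap.id
  | _, _, .cons e p => (ρ.φ e).comp (ρ.walkMap p)

/-- The representation is consistent with the labelling: two paths with the same
source, target and label induce the same linear map. -/
def Consistent (ρ : QRep R Q) : Prop :=
  ∀ (u v : V) (p q : Q.Walk u v), Q.wlabel p = Q.wlabel q → ρ.walkMap p = ρ.walkMap q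

/-- The realization `φ_{v,w}(f)` of a polynomial `f` (for a consistent representation and
`(v,w) ∈ σ(f)`, this is the well-defined linear map of the paper). -/
noncomputable def real (ρ : QRep R Q) (v w : V) (f : MonoidAlgebra R (FreeMonoid X)) :
    ρ.M v →ₗ[R] ρ.M w :=
  ∑ m ∈ f.coeff.support, f.coeff m •
    (letI : Decidable (∃ p : Q.Walk v w, Q.wlabel p = m) := Classical.dec _
     if h : ∃ p : Q.Walk v w, Q.wlabel p = m then ρ.walkMap h.choose else 0)

end QRep


/-! A path labelled `a * LM(g) * b` splits into three paths labelled `b`, `LM(g)` and `a`.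
Since `g` is `Q`-order compatible, the middle one may be replaced by a path labelled by any
monomial `t` of `g`, so `σ(a * LM(g) * b) ⊆ σ(a * g * b)`. The signature of a difference contains
the intersection of the two signatures. -/

namespace LQuiver

variable {V : Type u₁} {E : Type u₂} {X : Type u₃} {Q : LQuiver V E X}

def Walk.append : ∀ {u v w : V}, Q.Walk u v → Q.Walk v w → Q.Walk u w
  | _, _, _, p, .nil _ => p
  | _, _, _, p, .cons e q => .cons e (p.append q)

@[simp]
theorem wlabel_nil (v : V) : Q.wlabel (.nil v) = 1 := by
  rw [wlabel]

@[simp]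
theorem wlabel_cons {u : V} (e : E) (p : Q.Walk u (Q.src e)) :
    Q.wlabel (.cons e p) = FreeMonoid.of (Q.lab e) * Q.wlabel p := by
  rw [wlabel]

theorem wlabel_append : ∀ {u v w : V} (p : Q.Walk u v) (q : Q.Walk v w),
    Q.wlabel (p.append q) = Q.wlabel q * Q.wlabel p
  | _, _, _, _, .nil _ => by simp [Walk.append]
  | _, _, _, p, .cons e q => by simp [Walk.append, wlabel_append p q, mul_assoc]

/-- Labels are read from the last edge to the first, so the walk labelled `m₂` comes first. -/
theorem exists_split_of_wlabel_eq_mul (m₁ : FreeMonoid X) :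
    ∀ {u v : V} (p : Q.Walk u v) (m₂ : FreeMonoid X), Q.wlabel p = m₁ * m₂ →
      ∃ (z : V) (p₂ : Q.Walk u z) (p₁ : Q.Walk z v), Q.wlabel p₂ = m₂ ∧ Q.wlabel p₁ = m₁ := by
  induction m₁ using FreeMonoid.inductionOn' with
  | one => exact fun p _ h => ⟨_, p, .nil _, by simpa using h, wlabel_nil _⟩
  | of_mul x m₁ ih =>
    intro u v p m₂ h
    cases p with
    | nil => exact absurd (congrArg FreeMonoid.length h) (by simp; omega)
    | cons e p =>
      rw [wlabel_cons, mul_assoc] at h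
      obtain ⟨hx, hp⟩ : Q.lab e = x ∧ (Q.wlabel p).toList = (m₁ * m₂).toList := by
        simpa using congrArg FreeMonoid.toList h
      obtain ⟨z, p₂, p₁, h₂, h₁⟩ := ih p m₂ (FreeMonoid.toList.injective hp)
      exact ⟨z, p₂, .cons e p₁, h₂, by rw [wlabel_cons, h₁, hx]⟩

theorem mem_sigW_mul {u v : V} {m₁ m₂ : FreeMonoid X} :
    (u, v) ∈ Q.sigW (m₁ * m₂) ↔ ∃ z, (u, z) ∈ Q.sigW m₂ ∧ (z, v) ∈ Q.sigW m₁ := by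
  constructor
  · rintro ⟨p, hp⟩
    obtain ⟨z, p₂, p₁, h₂, h₁⟩ := exists_split_of_wlabel_eq_mul m₁ p m₂ hp
    exact ⟨z, ⟨p₂, h₂⟩, ⟨p₁, h₁⟩⟩
  · rintro ⟨z, ⟨p₂, h₂⟩, ⟨p₁, h₁⟩⟩
    exact ⟨p₂.append p₁, by rw [wlabel_append, h₁, h₂]⟩

theorem sigW_mul_mul_mono {m m' : FreeMonoid X} (h : Q.sigW m ⊆ Q.sigW m') (a b : FreeMonoid X) :
    Q.sigW (a * m * b) ⊆ Q.sigW (a * m' * b) := by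
  rintro ⟨u, v⟩ huv
  obtain ⟨z, hb, hz⟩ := mem_sigW_mul.mp huv
  obtain ⟨y, hm, ha⟩ := mem_sigW_mul.mp hz
  exact mem_sigW_mul.mpr ⟨z, hb, mem_sigW_mul.mpr ⟨y, h hm, ha⟩⟩

variable {R : Type u₄} [CommRing R]

theorem subset_sig_iff {S : Set (V × V)} {f : MonoidAlgebra R (FreeMonoid X)} :
    S ⊆ Q.sig f ↔ ∀ n ∈ f.coeff.support, S ⊆ Q.sigW n := by
  simp only [sig, Set.subset_iInter_iff]

theorem sig_subset_sigW {f : MonoidAlgebra R (FreeMonoid X)} {n : FreeMonoid X}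
    (hn : n ∈ f.coeff.support) : Q.sig f ⊆ Q.sigW n :=
  subset_sig_iff.mp subset_rfl n hn

theorem sig_inter_sig_subset_sig_sub (f g : MonoidAlgebra R (FreeMonoid X)) :
    Q.sig f ∩ Q.sig g ⊆ Q.sig (f - g) := by
  classical
  refine subset_sig_iff.mpr fun n hn => ?_
  rw [MonoidAlgebra.coeff_sub] at hn
  rcases Finset.mem_union.mp (Finsupp.support_sub hn) with h | h
  · exact Set.inter_subset_left.trans (sig_subset_sigW h)
  · exact Set.inter_subset_right.trans (sig_subset_sigW h)

end LQuiver

theorem support_mono_mul_mul_mono_subset {R : Type u₄} [CommRing R] {X : Type u₃}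
    [DecidableEq (FreeMonoid X)] (f : MonoidAlgebra R (FreeMonoid X)) (a b : FreeMonoid X) :
    (mono R a * f * mono R b).coeff.support ⊆ f.coeff.support.image (a * · * b) := by
  refine (MonoidAlgebra.support_coeff_mul_single_subset _ _ _).trans ?_
  rw [show (a * · * b) = (· * b) ∘ (a * ·) from rfl, ← Finset.image_image]
  exact Finset.image_subset_image (MonoidAlgebra.support_coeff_single_mul_subset _ _ _)

theorem QOrderCompatible.sigW_subset_sig_mono_mul_mul_mono {V : Type u₁} {E : Type u₂}
    {X : Type u₃} {K : Type u₄} [CommRing K] {Q : LQuiver V E X} {ord : LinearOrder (FreeMonoid X)}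
    {g : MonoidAlgebra K (FreeMonoid X)} (hg : QOrderCompatible Q ord g) (a b : FreeMonoid X) :
    Q.sigW (a * LM ord g * b) ⊆ Q.sig (mono K a * g * mono K b) := by
  classical
  refine LQuiver.subset_sig_iff.mpr fun n hn => ?_
  obtain ⟨t, ht, rfl⟩ := Finset.mem_image.mp (support_mono_mul_mul_mono_subset g a b hn)
  refine LQuiver.sigW_mul_mul_mono ?_ a b
  rw [hg.2]
  exact LQuiver.sig_subset_sigW ht

theorem sig_source_subset_sig_SPoly_general {V E X K : Type*} [Field K] (Q : LQuiver V E X)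
    (ord : LinearOrder (FreeMonoid X))
    (G : Set (MonoidAlgebra K (FreeMonoid X)))
    (hG : ∀ g ∈ G, g ≠ 0 ∧ QOrderCompatible Q ord g)
    (g g' : MonoidAlgebra K (FreeMonoid X)) (hg : g ∈ G) (hg' : g' ∈ G)
    (a b a' b' m : FreeMonoid X)
    (hm1 : a * LM ord g * b = m) (hm2 : a' * LM ord g' * b' = m) :
    Q.sigW m ⊆ Q.sig (mono K a * g * mono K b - mono K a' * g' * mono K b') := by
  subst hm1
  refine subset_trans (Set.subset_inter ?_ ?_) (LQuiver.sig_inter_sig_subset_sig_sub _ _)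
  · exact (hG g hg).2.sigW_subset_sig_mono_mul_mul_mono a b
  · rw [← hm2]
    exact (hG g' hg').2.sigW_subset_sig_mono_mul_mul_mono a' b'

/-- the signature of a compatible source of an `S`-polynomial of `Q`-order
compatible polynomials is contained in the signature of the `S`-polynomial. -/
theorem sig_source_subset_sig_SPoly {V E X K : Type*} [Field K] (Q : LQuiver V E X)
    (ord : LinearOrder (FreeMonoid X)) (hord : IsMonomialOrder ord)
    (G : Set (MonoidAlgebra K (FreeMonoid X)))
    (hG : ∀ g ∈ G, g ≠ 0 ∧ QOrderCompatible Q ord g)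
    (g g' : MonoidAlgebra K (FreeMonoid X)) (hg : g ∈ G) (hg' : g' ∈ G)
    (hmonic : g.coeff (LM ord g) = 1) (hmonic' : g'.coeff (LM ord g') = 1)
    (a b a' b' m : FreeMonoid X)
    (hm1 : a * LM ord g * b = m) (hm2 : a' * LM ord g' * b' = m)
    (hmc : (Q.sigW m).Nonempty) :
    Q.sigW m ⊆ Q.sig (mono K a * g * mono K b - mono K a' * g' * mono K b') :=
  sig_source_subset_sig_SPoly_general Q ord G hG g g' hg hg' a b a' b' m hm1 hm2
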